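/- For every measurable scoring function g : 𝒳 → ℝ and every threshold λ ∈ ℝ, the stochastic process M_t(g, λ) := ∑_{u=1}^t (Z_u·1{g(X_u) > λ} − FPR(g, λ)), t ≥ 1, is a martingale with respect to the filtration (ℱ_t): each M_t(g, λ) is integrable and ℱ_t-measurable, and E[M_t(g, λ) | ℱ_{t−1}] = M_{t−1}(g, λ) almost surely. -/

import Mathlib

open MeasureTheory ProbabilityTheory
open scoped Classical

/-! Given `ℱ_{t-1} ∨ σ(X_t)`, the region `A_t` is known and the coin `I_t` still has mean `p`, so
the importance weight `Z_t` has conditional mean `1`. By the tower property,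
`E[Z_t 1{g(X_t) > λ} | ℱ_{t-1}] = E[1{g(X_t) > λ} | ℱ_{t-1}] = D₀{g > λ}`, the last step because
`X_t` is independent of `ℱ_{t-1}` with law `D₀`; so the increments of `M` are centred. -/

noncomputable def importanceWeight {Ω : Type*} (p : ℝ) (S : Set Ω) (I : Ω → ℝ) : Ω → ℝ :=
  S.indicator 1 + p⁻¹ • Sᶜ.indicator I

lemma importanceWeight_apply {Ω : Type*} (p : ℝ) (S : Set Ω) (I : Ω → ℝ) (ω : Ω) :
    importanceWeight p S I ω =
      (if ω ∈ S then 1 else 0) + 1 / p * (if ω ∈ S then 0 else 1) * I ω := by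
  by_cases hω : ω ∈ S <;> simp [importanceWeight, hω]

section

variable {Ω : Type*} {m0 : MeasurableSpace Ω} {P : Measure Ω} {p : ℝ} {S : Set Ω} {I : Ω → ℝ}

lemma measurable_importanceWeight {m : MeasurableSpace Ω} (hS : MeasurableSet[m] S)
    (hI : Measurable[m] I) : Measurable[m] (importanceWeight p S I) :=
  (measurable_one.indicator hS).add ((hI.indicator hS.compl).const_smul _)

lemma integrable_importanceWeight [IsFiniteMeasure P] (hS : MeasurableSet S)
    (hI : Integrable I P) : Integrable (importanceWeight p S I) P :=
  ((integrable_const 1).indicator hS).add ((hI.indicator hS.compl).smul _)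

lemma condExp_importanceWeight {𝒢 : MeasurableSpace Ω} (h𝒢 : 𝒢 ≤ m0) [IsFiniteMeasure P]
    (hp : p ≠ 0) (hS : MeasurableSet[𝒢] S) (hI : Integrable I P)
    (hIcond : P[I | 𝒢] =ᵐ[P] fun _ => p) :
    P[importanceWeight p S I | 𝒢] =ᵐ[P] 1 := by
  have hS₀ : MeasurableSet[m0] S := h𝒢 _ hS
  have hone : Integrable (S.indicator (1 : Ω → ℝ)) P := (integrable_const 1).indicator hS₀
  have hsplit := condExp_add hone ((hI.indicator hS₀.compl).smul p⁻¹) 𝒢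
  have hfirst : P[S.indicator (1 : Ω → ℝ) | 𝒢] = S.indicator 1 :=
    condExp_of_stronglyMeasurable h𝒢 (stronglyMeasurable_const.indicator hS) hone
  filter_upwards [hsplit, condExp_smul (m := 𝒢) (μ := P) p⁻¹ (Sᶜ.indicator I),
    condExp_indicator hI hS.compl, hIcond] with ω h₁ h₂ h₃ h₄
  rw [importanceWeight, h₁, Pi.add_apply, hfirst, h₂, Pi.smul_apply, h₃]
  by_cases hω : ω ∈ S <;> simp [hω, h₄, hp]

lemma condExp_importanceWeight_mul {m 𝒢 : MeasurableSpace Ω} (hm : m ≤ 𝒢) (h𝒢 : 𝒢 ≤ m0)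
    [IsFiniteMeasure P] (hp : p ≠ 0) (hS : MeasurableSet[𝒢] S) (hI : Integrable I P)
    (hIcond : P[I | 𝒢] =ᵐ[P] fun _ => p) {W : Ω → ℝ} (hW : StronglyMeasurable[𝒢] W) {C : ℝ}
    (hWC : ∀ᵐ ω ∂P, ‖W ω‖ ≤ C) :
    P[importanceWeight p S I * W | m] =ᵐ[P] P[W | m] := by
  have hZ := integrable_importanceWeight (p := p) (h𝒢 _ hS) hI
  have h𝒢step : P[importanceWeight p S I * W | 𝒢] =ᵐ[P] W := by
    rw [mul_comm]
    filter_upwards [condExp_stronglyMeasurable_mul_of_bound h𝒢 hW hZ C hWC,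
      condExp_importanceWeight h𝒢 hp hS hI hIcond] with ω h₁ h₂
    simp [h₁, h₂]
  exact (condExp_condExp_of_le hm h𝒢).symm.trans (condExp_congr_ae h𝒢step)

lemma condExp_indicator_one_of_indep [IsFiniteMeasure P] {m₁ m : MeasurableSpace Ω}
    (hm₁ : m₁ ≤ m0) (hm : m ≤ m0) {E : Set Ω} (hE : MeasurableSet[m₁] E)
    (hindep : Indep m₁ m P) : P[E.indicator (1 : Ω → ℝ) | m] =ᵐ[P] fun _ => P.real E := by
  refine (condExp_indep_eq hm₁ hm (stronglyMeasurable_one.indicator hE) hindep).trans ?_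
  simp [integral_indicator_one (hm₁ _ hE)]

lemma condExp_eq_of_indep_of_bernoulli [IsFiniteMeasure P] {m : MeasurableSpace Ω}
    (hm : m ≤ m0) (hI : Measurable[m0] I) (h01 : ∀ ω, I ω = 0 ∨ I ω = 1) (hp : 0 ≤ p)
    (hIp : P {ω | I ω = 1} = ENNReal.ofReal p)
    (hindep : Indep (MeasurableSpace.comap I inferInstance) m P) :
    P[I | m] =ᵐ[P] fun _ => p := by
  have hI_eq : I = {ω | I ω = 1}.indicator 1 :=
    funext fun ω => by rcases h01 ω with h | h <;> simp [h]
  have hE : MeasurableSet[MeasurableSpace.comap I inferInstance] {ω | I ω = 1} :=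
    ⟨{1}, measurableSet_singleton 1, rfl⟩
  rw [hI_eq]
  refine (condExp_indicator_one_of_indep (measurable_iff_comap_le.1 hI) hm hE hindep).trans ?_
  simp [measureReal_def, hIp, hp]

lemma measurableSet_setOf_prodMk_mem {𝒳 : Type*} [m𝒳 : MeasurableSpace 𝒳]
    {m' m : MeasurableSpace Ω} (hm : m' ≤ m) {A : Set (Ω × 𝒳)}
    (hA : MeasurableSet[m'.prod m𝒳] A) {X : Ω → 𝒳} (hX : Measurable[m] X) :
    MeasurableSet[m] {ω | (ω, X ω) ∈ A} :=
  (measurable_id'' hm).prodMk hX hA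

lemma norm_indicator_one_le_one (E : Set Ω) (ω : Ω) : ‖E.indicator (1 : Ω → ℝ) ω‖ ≤ 1 := by
  simpa using norm_indicator_le_norm_self (1 : Ω → ℝ) ω

lemma condExp_importanceWeight_mul_indicator_preimage [IsFiniteMeasure P] {𝒳 : Type*}
    [m𝒳 : MeasurableSpace 𝒳] {m : MeasurableSpace Ω} (hm : m ≤ m0) {X : Ω → 𝒳}
    (hX : Measurable[m0] X) (hXindep : Indep (MeasurableSpace.comap X m𝒳) m P) (hp : p ≠ 0)
    (hS : MeasurableSet[m ⊔ MeasurableSpace.comap X m𝒳] S) (hI : Integrable I P)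
    (hIcond : P[I | m ⊔ MeasurableSpace.comap X m𝒳] =ᵐ[P] fun _ => p)
    {T : Set 𝒳} (hT : MeasurableSet T) :
    P[importanceWeight p S I * (X ⁻¹' T).indicator 1 | m] =ᵐ[P] fun _ => P.real (X ⁻¹' T) := by
  have hE : MeasurableSet[MeasurableSpace.comap X m𝒳] (X ⁻¹' T) := ⟨T, hT, rfl⟩
  refine (condExp_importanceWeight_mul le_sup_left (sup_le hm hX.comap_le) hp hS hI hIcond
    (stronglyMeasurable_one.indicator (le_sup_right (a := m) _ hE))
    (ae_of_all _ (norm_indicator_one_le_one _))).trans ?_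
  exact condExp_indicator_one_of_indep hX.comap_le hm hE hXindep

lemma martingale_sum_Icc_sub_of_condExp_eq_const [IsFiniteMeasure P] {E : Type*}
    [NormedAddCommGroup E] [NormedSpace ℝ E] [CompleteSpace E] {ℱ : Filtration ℕ m0}
    {Y : ℕ → Ω → E} {c : E} (hY : ∀ u, 1 ≤ u → StronglyMeasurable[ℱ u] (Y u))
    (hint : ∀ u, 1 ≤ u → Integrable (Y u) P) (hcond : ∀ s, P[Y (s + 1) | ℱ s] =ᵐ[P] fun _ => c) :
    Martingale (fun t => ∑ u ∈ Finset.Icc 1 t, (Y u - fun _ => c)) ℱ P := by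
  refine martingale_of_condExp_sub_eq_zero_nat
    (fun t => Finset.stronglyMeasurable_sum _ fun u hu =>
      ((hY u (Finset.mem_Icc.1 hu).1).mono (ℱ.mono (Finset.mem_Icc.1 hu).2)).sub
        stronglyMeasurable_const)
    (fun t => integrable_finsetSum' _ fun u hu =>
      (hint u (Finset.mem_Icc.1 hu).1).sub (integrable_const c))
    fun s => ?_
  rw [Finset.sum_Icc_succ_top (by omega), add_sub_cancel_left]
  filter_upwards [condExp_sub (hint (s + 1) (by omega)) (integrable_const c) (ℱ s), hcond s]
    with ω h₁ h₂
  simp [h₁, h₂, condExp_const (ℱ.le s)]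

end

theorem importance_weighted_fpr_martingale_general
    {Ω : Type*} [m0 : MeasurableSpace Ω] (P : Measure Ω) [IsProbabilityMeasure P]
    (ℱ : Filtration ℕ m0)
    {𝒳 : Type*} [m𝒳 : MeasurableSpace 𝒳] (D₀ : Measure 𝒳)
    (p : ℝ) (hp : 0 < p)
    (X : ℕ → Ω → 𝒳)
    (hXmeas : ∀ t, 1 ≤ t → Measurable[ℱ t] (X t))
    (hXindep : ∀ t, 1 ≤ t → Indep (MeasurableSpace.comap (X t) m𝒳) (ℱ (t - 1)) P)
    (hXlaw : ∀ t, 1 ≤ t → Measure.map (X t) P = D₀)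
    (A : ℕ → Set (Ω × 𝒳))
    (hA : ∀ t, 1 ≤ t → MeasurableSet[MeasurableSpace.prod (ℱ (t - 1)) m𝒳] (A t))
    (I : ℕ → Ω → ℝ)
    (hImeas : ∀ t, 1 ≤ t → Measurable[ℱ t] (I t))
    (hI01 : ∀ t ω, I t ω = 0 ∨ I t ω = 1)
    (hIp : ∀ t, 1 ≤ t → P {ω | I t ω = 1} = ENNReal.ofReal p)
    (hIindep : ∀ t, 1 ≤ t →
      Indep (MeasurableSpace.comap (I t) inferInstance)
        ((ℱ (t - 1) : MeasurableSpace Ω) ⊔ MeasurableSpace.comap (X t) m𝒳) P)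
    (Z : ℕ → Ω → ℝ)
    (hZ : ∀ t ω, Z t ω = (if (ω, X t ω) ∈ A t then (1 : ℝ) else 0)
        + (1 / p) * (if (ω, X t ω) ∈ A t then (0 : ℝ) else 1) * I t ω)
    (g : 𝒳 → ℝ) (hg : Measurable g) (lam : ℝ)
    (M : ℕ → Ω → ℝ)
    (hM : ∀ t ω, M t ω = ∑ u ∈ Finset.Icc 1 t,
        (Z u ω * (if lam < g (X u ω) then (1 : ℝ) else 0)
          - (D₀ {x | lam < g x}).toReal)) :
    (∀ t, Integrable (M t) P) ∧ (∀ t, Measurable[ℱ t] (M t)) ∧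
      ∀ t, 1 ≤ t → P[M t | ℱ (t - 1)] =ᵐ[P] M (t - 1) := by
  have hT : MeasurableSet {x | lam < g x} := measurableSet_lt measurable_const hg
  have hX t (ht : 1 ≤ t) : Measurable (X t) := (hXmeas t ht).mono (ℱ.le t) le_rfl
  have hI t (ht : 1 ≤ t) : Measurable (I t) := (hImeas t ht).mono (ℱ.le t) le_rfl
  have hI_int t (ht : 1 ≤ t) : Integrable (I t) P :=
    .of_bound (hI t ht).aestronglyMeasurable 1
      (ae_of_all _ fun ω => by rcases hI01 t ω with h | h <;> simp [h])
  have hM_eq : M = fun t => ∑ u ∈ Finset.Icc 1 t,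
      (importanceWeight p {ω | (ω, X u ω) ∈ A u} (I u) * (X u ⁻¹' {x | lam < g x}).indicator 1
        - fun _ => (D₀ {x | lam < g x}).toReal) := by
    ext t ω
    simp [hM, hZ, importanceWeight_apply, Set.indicator_apply]
  have hmart : Martingale M ℱ P := by
    rw [hM_eq]
    refine martingale_sum_Icc_sub_of_condExp_eq_const (fun u hu => ?_) (fun u hu => ?_) fun s => ?_
    · exact ((measurable_importanceWeight (measurableSet_setOf_prodMk_mem
        (ℱ.mono (Nat.sub_le u 1)) (hA u hu) (hXmeas u hu)) (hImeas u hu)).mul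
        (measurable_const.indicator (hXmeas u hu hT))).stronglyMeasurable
    · exact (integrable_importanceWeight (measurableSet_setOf_prodMk_mem (ℱ.le _) (hA u hu)
        (hX u hu)) (hI_int u hu)).mul_bdd
        (measurable_const.indicator (hX u hu hT)).aestronglyMeasurable
        (ae_of_all _ (norm_indicator_one_le_one _))
    · have hs : 1 ≤ s + 1 := by omega
      rw [← hXlaw (s + 1) hs, ← measureReal_def, map_measureReal_apply (hX _ hs) hT]
      exact condExp_importanceWeight_mul_indicator_preimage (ℱ.le s) (hX _ hs) (hXindep _ hs)
        hp.ne' (measurableSet_setOf_prodMk_mem le_sup_left (hA _ hs)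
          (measurable_iff_comap_le.2 le_sup_right)) (hI_int _ hs)
        (condExp_eq_of_indep_of_bernoulli (sup_le (ℱ.le s) (hX _ hs).comap_le) (hI _ hs)
          (hI01 _) hp.le (hIp _ hs) (hIindep _ hs)) hT
  exact ⟨hmart.integrable, fun t => (hmart.stronglyAdapted t).measurable,
    fun t _ => hmart.condExp_ae_eq (Nat.sub_le t 1)⟩

/-- For every measurable scoring function `g` and threshold `λ`, the process
`M_t(g, λ) := ∑_{u=1}^t (Z_u·1{g(X_u) > λ} − FPR(g, λ))` is a martingale w.r.t. the
filtration `ℱ`: each `M_t` is integrable and `ℱ_t`-measurable, and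
`E[M_t | ℱ_{t−1}] = M_{t−1}` almost surely. -/
theorem importance_weighted_fpr_martingale
    {Ω : Type*} [m0 : MeasurableSpace Ω] (P : Measure Ω) [IsProbabilityMeasure P]
    (ℱ : Filtration ℕ m0)
    {𝒳 : Type*} [m𝒳 : MeasurableSpace 𝒳] (D₀ : Measure 𝒳) [IsProbabilityMeasure D₀]
    (p : ℝ) (hp : 0 < p) (hp1 : p ≤ 1)
    (X : ℕ → Ω → 𝒳)
    (hXmeas : ∀ t, 1 ≤ t → Measurable[ℱ t] (X t))
    (hXindep : ∀ t, 1 ≤ t → Indep (MeasurableSpace.comap (X t) m𝒳) (ℱ (t - 1)) P)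
    (hXlaw : ∀ t, 1 ≤ t → Measure.map (X t) P = D₀)
    (A : ℕ → Set (Ω × 𝒳))
    (hA : ∀ t, 1 ≤ t → MeasurableSet[MeasurableSpace.prod (ℱ (t - 1)) m𝒳] (A t))
    (I : ℕ → Ω → ℝ)
    (hImeas : ∀ t, 1 ≤ t → Measurable[ℱ t] (I t))
    (hI01 : ∀ t ω, I t ω = 0 ∨ I t ω = 1)
    (hIp : ∀ t, 1 ≤ t → P {ω | I t ω = 1} = ENNReal.ofReal p)
    (hIindep : ∀ t, 1 ≤ t →
      Indep (MeasurableSpace.comap (I t) inferInstance)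
        ((ℱ (t - 1) : MeasurableSpace Ω) ⊔ MeasurableSpace.comap (X t) m𝒳) P)
    (Z : ℕ → Ω → ℝ)
    (hZ : ∀ t ω, Z t ω = (if (ω, X t ω) ∈ A t then (1 : ℝ) else 0)
        + (1 / p) * (if (ω, X t ω) ∈ A t then (0 : ℝ) else 1) * I t ω)
    (g : 𝒳 → ℝ) (hg : Measurable g) (lam : ℝ)
    (M : ℕ → Ω → ℝ)
    (hM : ∀ t ω, M t ω = ∑ u ∈ Finset.Icc 1 t,
        (Z u ω * (if lam < g (X u ω) then (1 : ℝ) else 0)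
          - (D₀ {x | lam < g x}).toReal)) :
    (∀ t, Integrable (M t) P) ∧ (∀ t, Measurable[ℱ t] (M t)) ∧
      ∀ t, 1 ≤ t → P[M t | ℱ (t - 1)] =ᵐ[P] M (t - 1) :=
  importance_weighted_fpr_martingale_general (m0 := m0) P ℱ (m𝒳 := m𝒳) D₀ p hp X hXmeas hXindep
    hXlaw A hA I hImeas hI01 hIp hIindep Z hZ g hg lam M hM
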